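/- Let p be a prime and let G be a finitely generated pro-p group with a ℤ_p-splitting G = A ⨿_C B (respectively G = HNN(A, C, t)). Suppose A splits as a nontrivial free pro-p product A = A₁ ⨿ A₂ such that some A-conjugate of C is contained in A₁ or in A₂ (and, in the HNN case, also some A-conjugate of t⁻¹Ct is contained in A₁ or in A₂). Then G splits as a nontrivial free pro-p product. (This is the algebraic form—via the equivalence, for finitely generated pro-p groups, between nontrivial free pro-p decompositions and actions on infinite pro-p trees with trivial edge stabilizers—of the statement: if A admits an action on an infinite pro-p tree with trivial edge stabilizers in which C is elliptic, then so does G.) -/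

import Mathlib

open Subgroup

universe u

/-- A pro-`p` group: compact, Hausdorff, totally disconnected topological group in which
every open normal subgroup has index a power of `p`. -/
def IsProP (p : ℕ) (G : Type u) [Group G] [TopologicalSpace G] : Prop :=
  CompactSpace G ∧ T2Space G ∧ TotallyDisconnectedSpace G ∧
    ∀ U : Subgroup G, U.Normal → IsOpen (U : Set G) → ∃ n : ℕ, U.index = p ^ n

/-- Topologically isomorphic to the (additive) group `ℤ_p` of `p`-adic integers. -/
def IsTopIsoZp (p : ℕ) [Fact p.Prime] (H : Type*) [Group H] [TopologicalSpace H] : Prop :=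
  ∃ e : H ≃* Multiplicative ℤ_[p], Continuous e ∧ Continuous e.symm

/-- Topologically isomorphic to `ℤ_p × ℤ_p`. -/
def IsTopIsoZpxZp (p : ℕ) [Fact p.Prime] (H : Type*) [Group H] [TopologicalSpace H] : Prop :=
  ∃ e : H ≃* Multiplicative ℤ_[p] × Multiplicative ℤ_[p], Continuous e ∧ Continuous e.symm

/-- The closed subgroup topologically generated by one element. -/
def topGenBy {G : Type u} [Group G] [TopologicalSpace G] [IsTopologicalGroup G] (x : G) :
    Subgroup G :=
  (Subgroup.closure {x}).topologicalClosure

/-- Topologically finitely generated. -/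
def TopFiniteGen (G : Type u) [Group G] [TopologicalSpace G] [IsTopologicalGroup G] : Prop :=
  ∃ S : Finset G, (Subgroup.closure (S : Set G)).topologicalClosure = ⊤

/-- Topologically procyclic: topologically generated by a single element. -/
def Procyclic (G : Type u) [Group G] [TopologicalSpace G] [IsTopologicalGroup G] : Prop :=
  ∃ x : G, topGenBy x = ⊤

/-- `G` splits as a proper amalgamated free pro-`p` product `G = A ⨿_C B`:
`A`, `B` are closed subgroups with `A ⊓ B = C`, `G` is topologically generated by `A ∪ B`,
and the universal property for pairs of continuous homomorphisms into pro-`p` groups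
agreeing on `C` holds. -/
def IsAmalgFreeProdP (p : ℕ) (G : Type u) [Group G] [TopologicalSpace G] [IsTopologicalGroup G]
    (A B C : Subgroup G) : Prop :=
  IsClosed (A : Set G) ∧ IsClosed (B : Set G) ∧ A ⊓ B = C ∧
    (A ⊔ B).topologicalClosure = ⊤ ∧
    ∀ (K : Type u) [Group K] [TopologicalSpace K] [IsTopologicalGroup K],
      IsProP p K →
      ∀ (ψ₁ : A →* K) (ψ₂ : B →* K), Continuous ψ₁ → Continuous ψ₂ →
        (∀ (x : G) (hA : x ∈ A) (hB : x ∈ B), ψ₁ ⟨x, hA⟩ = ψ₂ ⟨x, hB⟩) →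
        ∃! φ : G →* K, Continuous φ ∧ (∀ a : A, φ a = ψ₁ a) ∧ (∀ b : B, φ b = ψ₂ b)

/-- `G` splits as a proper pro-`p` HNN-extension `G = HNN(A, C, t)`:
`A` is a closed subgroup, `C ≤ A` closed with `t⁻¹Ct ≤ A`, `G` is topologically generated
by `A ∪ {t}`, and the universal property holds. -/
def IsHNNProP (p : ℕ) (G : Type u) [Group G] [TopologicalSpace G] [IsTopologicalGroup G]
    (A C : Subgroup G) (t : G) : Prop :=
  IsClosed (A : Set G) ∧ IsClosed (C : Set G) ∧ C ≤ A ∧ (∀ c ∈ C, t⁻¹ * c * t ∈ A) ∧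
    (A ⊔ Subgroup.closure {t}).topologicalClosure = ⊤ ∧
    ∀ (K : Type u) [Group K] [TopologicalSpace K] [IsTopologicalGroup K],
      IsProP p K →
      ∀ (ψ : A →* K) (k : K), Continuous ψ →
        (∀ (c : G) (hcC : c ∈ C) (hcA : c ∈ A) (hct : t⁻¹ * c * t ∈ A),
          k⁻¹ * ψ ⟨c, hcA⟩ * k = ψ ⟨t⁻¹ * c * t, hct⟩) →
        ∃! ω : G →* K, Continuous ω ∧ (∀ a : A, ω a = ψ a) ∧ ω t = k

/-- `G` does not split as a nontrivial free pro-`p` product (= proper amalgamated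
free pro-`p` product over the trivial subgroup with both factors nontrivial). -/
def FreeIndecomposable (p : ℕ) (G : Type u) [Group G] [TopologicalSpace G]
    [IsTopologicalGroup G] : Prop :=
  ¬ ∃ A B : Subgroup G, IsAmalgFreeProdP p G A B ⊥ ∧ A ≠ ⊥ ∧ B ≠ ⊥

/-- The conjugate subgroup `C^t = t⁻¹ C t`. -/
def conjSub {G : Type u} [Group G] (t : G) (C : Subgroup G) : Subgroup G :=
  C.map (MulAut.conj t⁻¹).toMonoidHom

/-- The data of a splitting of `G`: an amalgamated free product `A ⨿_C B`
or an HNN-extension `HNN(A, C, t)`. -/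
inductive SplitData (G : Type u) [Group G] : Type u
  | amalg : Subgroup G → Subgroup G → Subgroup G → SplitData G
  | hnn : Subgroup G → Subgroup G → G → SplitData G

namespace SplitData

variable {G : Type u} [Group G]

/-- The amalgamated (resp. associated) subgroup of a splitting. -/
def C : SplitData G → Subgroup G
  | amalg _ _ C => C
  | hnn _ C _ => C

/-- `g` is elliptic: some conjugate of `g` lies in `A ∪ B` (resp. in `A`). -/
def Elliptic : SplitData G → G → Prop
  | amalg A B _, g => ∃ h : G, h⁻¹ * g * h ∈ A ∨ h⁻¹ * g * h ∈ B
  | hnn A _ _, g => ∃ h : G, h⁻¹ * g * h ∈ A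

/-- `g` is hyperbolic: not elliptic. -/
def Hyperbolic (S : SplitData G) (g : G) : Prop := ¬ S.Elliptic g

/-- The splitting is an HNN-extension (not an amalgam). -/
def IsHNNCase : SplitData G → Prop
  | amalg _ _ _ => False
  | hnn _ _ _ => True

variable [TopologicalSpace G] [IsTopologicalGroup G]

/-- The data is a genuine `ℤ_p`-splitting of `G`: a proper non-fictitious amalgamated free
pro-`p` product, or a proper pro-`p` HNN-extension, over a subgroup `C ≅ ℤ_p`. -/
def IsZp (p : ℕ) [Fact p.Prime] : SplitData G → Prop
  | amalg A B C => IsAmalgFreeProdP p G A B C ∧ C ≠ A ∧ C ≠ B ∧ IsTopIsoZp p ↥C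
  | hnn A C t => IsHNNProP p G A C t ∧ IsTopIsoZp p ↥C

end SplitData

/-- Two splittings form a hyperbolic-hyperbolic pair: every topological generator of `C₁`
is hyperbolic with respect to the second splitting and vice versa. -/
def HypHypPair {G : Type u} [Group G] [TopologicalSpace G] [IsTopologicalGroup G]
    (S₁ S₂ : SplitData G) : Prop :=
  (∀ c : G, topGenBy c = S₁.C → S₂.Hyperbolic c) ∧
  (∀ c : G, topGenBy c = S₂.C → S₁.Hyperbolic c)

/-- `H` is malnormal in the subgroup `K` (both subgroups of an ambient group). -/
def MalnormalIn {G : Type u} [Group G] (H K : Subgroup G) : Prop :=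
  ∀ k ∈ K, k ∉ H → ∀ x ∈ H, k⁻¹ * x * k ∈ H → x = 1

/-- The malnormality conclusion for a splitting: `C` is malnormal in `A` or `B`
(resp. `C` or `C^t` is malnormal in `A`). -/
def SplitData.MalnormalConcl {G : Type u} [Group G] : SplitData G → Prop
  | .amalg A B C => MalnormalIn C A ∨ MalnormalIn C B
  | .hnn A C t => MalnormalIn C A ∨ MalnormalIn (conjSub t C) A

/-- The 2-acylindricity of the action on the standard pro-`p` tree, spelled out through
edge stabilizers: no nontrivial element fixes three consecutive edges. -/
def SplitData.TwoAcylConcl {G : Type u} [Group G] : SplitData G → Prop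
  | .amalg A B C => ∀ a ∈ A, a ∉ C → ∀ b ∈ B, b ∉ C →
      ∀ g ∈ C, a⁻¹ * g * a ∈ C → b⁻¹ * g * b ∈ C → g = 1
  | .hnn A C t => ∀ x : G, (x ∈ A ∨ x * t ∈ A) → x ∉ C →
      ∀ y : G, (t⁻¹ * y ∈ A ∨ t⁻¹ * y * t ∈ A) → y ∉ C →
      x⁻¹ * y ∉ C →
      ∀ g ∈ C, x⁻¹ * g * x ∈ C → y⁻¹ * g * y ∈ C → g = 1

/-- The pro-2 Klein bottle `ℤ₂ ⋊ ℤ₂` (action by inversion through `ℤ₂/2ℤ₂`), characterized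
internally. -/
def IsProKleinBottle (N : Type*) [Group N] [TopologicalSpace N] [IsTopologicalGroup N] : Prop :=
  ∃ a t : N, t⁻¹ * a * t = a⁻¹ ∧ (topGenBy a).Normal ∧
    IsTopIsoZp 2 ↥(topGenBy a) ∧ IsTopIsoZp 2 ↥(topGenBy t) ∧
    topGenBy a ⊓ topGenBy t = ⊥ ∧ (topGenBy a ⊔ topGenBy t).topologicalClosure = ⊤

/-- The infinite dihedral pro-2 group `ℤ₂ ⋊ ℤ/2ℤ` (with inversion), characterized
internally. -/
def IsInfDihedralPro2 (N : Type*) [Group N] [TopologicalSpace N] [IsTopologicalGroup N] : Prop :=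
  ∃ a s : N, s * s = 1 ∧ s ≠ 1 ∧ s⁻¹ * a * s = a⁻¹ ∧ (topGenBy a).Normal ∧
    IsTopIsoZp 2 ↥(topGenBy a) ∧ s ∉ topGenBy a ∧
    (topGenBy a ⊔ topGenBy s).topologicalClosure = ⊤

/-- `(ℤ₂ × ℤ₂) ⋊ ℤ/2ℤ` with `ℤ/2ℤ` acting by inversion, characterized internally. -/
def IsZ2xZ2ByInversion (N : Type*) [Group N] [TopologicalSpace N] [IsTopologicalGroup N] : Prop :=
  ∃ (M : Subgroup N) (s : N), IsClosed (M : Set N) ∧ M.Normal ∧ IsTopIsoZpxZp 2 ↥M ∧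
    s * s = 1 ∧ s ∉ M ∧ (∀ m ∈ M, s⁻¹ * m * s = m⁻¹) ∧
    (M ⊔ topGenBy s).topologicalClosure = ⊤

/-- A semidirect product `(ℤ₂ ⋊ ℤ₂) ⋊ ℤ/2ℤ` of the pro-2 Klein bottle and a group of
order 2, characterized internally. -/
def IsKleinByC2 (N : Type*) [Group N] [TopologicalSpace N] [IsTopologicalGroup N] : Prop :=
  ∃ (M : Subgroup N) (s : N), IsClosed (M : Set N) ∧ M.Normal ∧ IsProKleinBottle ↥M ∧
    s * s = 1 ∧ s ∉ M ∧ (M ⊔ topGenBy s).topologicalClosure = ⊤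

/-- `G` splits, as a proper non-fictitious amalgamated free pro-`p` product or a proper
pro-`p` HNN-extension, over a subgroup of order at most 2. -/
def SplitsOverSmall (p : ℕ) (G : Type u) [Group G] [TopologicalSpace G]
    [IsTopologicalGroup G] : Prop :=
  ∃ H : Subgroup G, Nat.card H ≤ 2 ∧
    ((∃ G₁ G₂ : Subgroup G, IsAmalgFreeProdP p G G₁ G₂ H ∧ H ≠ G₁ ∧ H ≠ G₂) ∨
     (∃ (A : Subgroup G) (t : G), IsHNNProP p G A H t))

/-- `X` is contained in some conjugate of `Y`. -/
def InConjOf {G : Type u} [Group G] (X Y : Subgroup G) : Prop :=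
  ∃ g : G, ∀ x ∈ X, g * x * g⁻¹ ∈ Y

/-- The base factors of the splitting (both `A` and `B` in the amalgam case, `A` in the
HNN case) are each contained in conjugates of subgroups satisfying `P`. -/
def SplitData.BaseConjInto {G : Type u} [Group G] : SplitData G → (Subgroup G → Prop) → Prop
  | .amalg A B _, P => (∃ Y, P Y ∧ InConjOf A Y) ∧ (∃ Y, P Y ∧ InConjOf B Y)
  | .hnn A _ _, P => ∃ Y, P Y ∧ InConjOf A Y


/-- The subgroup `D = ⟨N_G(C₁) ∪ B₁⟩` appearing in the canonical decomposition
`G = A₁ ⨿_{N_{A₁}(C₁)} D` of an amalgam `G = A₁ ⨿_{C₁} B₁`. -/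
def amalgD {G : Type u} [Group G] [TopologicalSpace G] [IsTopologicalGroup G]
    (B₁ C₁ : Subgroup G) : Subgroup G :=
  (Subgroup.normalizer (C₁ : Set G) ⊔ B₁).topologicalClosure

/-- The subgroup `E = ⟨A₁ ∪ N_G(C₁^{t₁})⟩` appearing in the canonical decomposition
`G = HNN(E, N_{A₁}(C₁), t₁)` of an HNN-extension `G = HNN(A₁, C₁, t₁)`. -/
def hnnE {G : Type u} [Group G] [TopologicalSpace G] [IsTopologicalGroup G]
    (A₁ C₁ : Subgroup G) (t₁ : G) : Subgroup G :=
  (A₁ ⊔ Subgroup.normalizer ((conjSub t₁ C₁ : Subgroup G) : Set G)).topologicalClosure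

/-!
Write `A = A₁ ⨿ A₂` with `C^a ≤ A₁`. For an amalgam `G = A ⨿_C B`, regluing gives
`G = A₂ ⨿ ⟨A₁, B^a⟩`. For `G = HNN(A, C, t)` with `(C^t)^{a'}` in `A₁` or in `A₂`, put
`t' = a⁻¹ t a'`; then `G = A₂ ⨿ ⟨A₁, t'⟩` or `G = ⟨A₂, A₁^{t'}⟩ ⨿ ⟨t'⟩` respectively, and in the
second case `t' ≠ 1` because `t ∉ A` (the group `C ≅ ℤ_p` is nontrivial and abelian).

In each case a pair of homomorphisms on the two new factors is extended by first extending over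
`A = A₁ ⨿ A₂` and then over the splitting of `G`. Uniqueness follows by density, and the trivial
intersection follows by extending the pair `(inclusion, trivial)` into `G` itself.
-/

section TopGen

variable {G : Type*} [Group G] [TopologicalSpace G] [IsTopologicalGroup G]

def topGen (S : Set G) : Subgroup G :=
  (Subgroup.closure S).topologicalClosure

theorem subset_topGen (S : Set G) : S ⊆ topGen S :=
  (Subgroup.subset_closure).trans (Subgroup.le_topologicalClosure _)

theorem isClosed_topGen (S : Set G) : IsClosed (topGen S : Set G) :=
  Subgroup.isClosed_topologicalClosure _

theorem topGen_le {S : Set G} {H : Subgroup G} (hH : IsClosed (H : Set G)) (hS : S ⊆ H) :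
    topGen S ≤ H :=
  Subgroup.topologicalClosure_minimal _ ((Subgroup.closure_le H).mpr hS) hH

theorem topGen_ne_bot {S : Set G} {x : G} (hx : x ∈ S) (hx1 : x ≠ 1) : topGen S ≠ ⊥ :=
  (Subgroup.ne_bot_iff_exists_ne_one).mpr ⟨⟨x, subset_topGen S hx⟩, by simpa using hx1⟩

variable {K : Type*} [Group K] [TopologicalSpace K] [T2Space K]

theorem MonoidHom.eq_of_eqOn_topGen_eq_top {S : Set G} (hS : topGen S = ⊤) {φ φ' : G →* K}
    (hφ : Continuous φ) (hφ' : Continuous φ') (h : Set.EqOn φ φ' S) : φ = φ' := by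
  have : topGen S ≤ φ.eqLocus φ' := topGen_le (isClosed_eq hφ hφ') h
  rw [hS] at this
  exact MonoidHom.ext fun x => this (Subgroup.mem_top x)

theorem MonoidHom.eqOn_topGen {S : Set G} {φ : G →* K} {ψ : topGen S →* K}
    (hφ : Continuous φ) (hψ : Continuous ψ)
    (h : ∀ x (hx : x ∈ S), φ x = ψ ⟨x, subset_topGen S hx⟩) (x : topGen S) : φ x = ψ x := by
  let E : Subgroup G := ((φ.comp (topGen S).subtype).eqLocus ψ).map (topGen S).subtype
  have hE : IsClosed (E : Set G) := by
    refine (isClosed_topGen S).isClosedEmbedding_subtypeVal.isClosedMap _ ?_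
    exact isClosed_eq (hφ.comp continuous_subtype_val) hψ
  obtain ⟨y, hy, hyx⟩ := topGen_le hE (fun x hx => ⟨⟨x, subset_topGen S hx⟩, h x hx, rfl⟩) x.2
  rw [← Subtype.ext hyx]
  exact hy

end TopGen

section FreeProduct

variable {p : ℕ} {G : Type u} [Group G] [TopologicalSpace G] [IsTopologicalGroup G]

/-- The existence half of the universal property of `topGen S₁ ⨿ topGen S₂`, with agreement
asked only on the generators. -/
def JointlyExtendable (p : ℕ) (S₁ S₂ : Set G) : Prop :=
  ∀ (K : Type u) [Group K] [TopologicalSpace K] [IsTopologicalGroup K], IsProP p K →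
    ∀ (ψ₁ : topGen S₁ →* K) (ψ₂ : topGen S₂ →* K), Continuous ψ₁ → Continuous ψ₂ →
      ∃ φ : G →* K, Continuous φ ∧ (∀ x (hx : x ∈ S₁), φ x = ψ₁ ⟨x, subset_topGen S₁ hx⟩) ∧
        ∀ x (hx : x ∈ S₂), φ x = ψ₂ ⟨x, subset_topGen S₂ hx⟩

theorem isAmalgFreeProdP_bot_of_jointlyExtendable (hG : IsProP p G) {S₁ S₂ : Set G}
    (hgen : topGen (S₁ ∪ S₂) = ⊤) (hext : JointlyExtendable p S₁ S₂) :
    IsAmalgFreeProdP p G (topGen S₁) (topGen S₂) ⊥ := by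
  have : T2Space G := hG.2.1
  refine ⟨isClosed_topGen S₁, isClosed_topGen S₂, ?_, ?_, ?_⟩
  · obtain ⟨φ, hφ, h₁, h₂⟩ := hext G hG (topGen S₁).subtype 1 continuous_subtype_val
      continuous_const
    refine eq_bot_iff.mpr fun x hx => ?_
    have hx₁ := MonoidHom.eqOn_topGen hφ continuous_subtype_val h₁ ⟨x, hx.1⟩
    have hx₂ := MonoidHom.eqOn_topGen hφ continuous_const h₂ ⟨x, hx.2⟩
    exact hx₁.symm.trans hx₂
  · refine eq_top_iff.mpr (hgen ▸ topGen_le (Subgroup.isClosed_topologicalClosure _) ?_)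
    refine Set.union_subset ?_ ?_ <;> intro x hx <;> apply Subgroup.le_topologicalClosure
    exacts [Subgroup.mem_sup_left (subset_topGen S₁ hx),
      Subgroup.mem_sup_right (subset_topGen S₂ hx)]
  · intro K _ _ _ hK ψ₁ ψ₂ hψ₁ hψ₂ _
    have : T2Space K := hK.2.1
    obtain ⟨φ, hφ, h₁, h₂⟩ := hext K hK ψ₁ ψ₂ hψ₁ hψ₂
    refine ⟨φ, ⟨hφ, MonoidHom.eqOn_topGen hφ hψ₁ h₁, MonoidHom.eqOn_topGen hφ hψ₂ h₂⟩, ?_⟩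
    rintro φ' ⟨hφ', h₁', h₂'⟩
    refine MonoidHom.eq_of_eqOn_topGen_eq_top hgen hφ' hφ ?_
    rintro x (hx | hx)
    · exact (h₁' ⟨x, _⟩).trans (h₁ x hx).symm
    · exact (h₂' ⟨x, _⟩).trans (h₂ x hx).symm

theorem IsAmalgFreeProdP.symm {A B C : Subgroup G} (h : IsAmalgFreeProdP p G A B C) :
    IsAmalgFreeProdP p G B A C := by
  obtain ⟨hA, hB, hAB, hgen, hUP⟩ := h
  refine ⟨hB, hA, inf_comm B A ▸ hAB, sup_comm B A ▸ hgen, ?_⟩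
  intro K _ _ _ hK ψ₁ ψ₂ hψ₁ hψ₂ hagree
  obtain ⟨φ, ⟨hφ, h₂, h₁⟩, huniq⟩ :=
    hUP K hK ψ₂ ψ₁ hψ₂ hψ₁ fun x hA hB => (hagree x hB hA).symm
  exact ⟨φ, ⟨hφ, h₁, h₂⟩, fun φ' ⟨hφ', h₁', h₂'⟩ => huniq φ' ⟨hφ', h₂', h₁'⟩⟩

theorem IsAmalgFreeProdP.exists_extension_of_bot {A₁ A₂ : Subgroup G}
    (h : IsAmalgFreeProdP p G A₁ A₂ ⊥) {K : Type u} [Group K] [TopologicalSpace K]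
    [IsTopologicalGroup K] (hK : IsProP p K) {θ₁ : A₁ →* K} {θ₂ : A₂ →* K}
    (hθ₁ : Continuous θ₁) (hθ₂ : Continuous θ₂) :
    ∃ χ : G →* K, Continuous χ ∧ (∀ y : A₁, χ y = θ₁ y) ∧ ∀ y : A₂, χ y = θ₂ y := by
  obtain ⟨-, -, hbot, -, hUP⟩ := h
  obtain ⟨χ, hχ, -⟩ := hUP K hK θ₁ θ₂ hθ₁ hθ₂ fun x hA hB => by
    obtain rfl : x = 1 := (Subgroup.mem_bot).mp (hbot ▸ ⟨hA, hB⟩)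
    exact (map_one θ₁).trans (map_one θ₂).symm
  exact ⟨χ, hχ⟩

end FreeProduct

section ConjSub

variable {G : Type*} [Group G]

theorem conj_mem_conjSub {C : Subgroup G} (t : G) {c : G} (hc : c ∈ C) :
    t⁻¹ * c * t ∈ conjSub t C :=
  ⟨c, hc, by simp⟩

theorem conj_mem_of_conjSub_subgroupOf_le {A C : Subgroup G} {A₁ : Subgroup A} {a : A}
    (h : conjSub a (C.subgroupOf A) ≤ A₁) {c : A} (hc : (c : G) ∈ C) : a⁻¹ * c * a ∈ A₁ :=
  h (conj_mem_conjSub a (Subgroup.mem_subgroupOf.mpr hc))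

theorem IsTopIsoZp.exists_ne_one_forall_commute {p : ℕ} [Fact p.Prime] [TopologicalSpace G]
    {C : Subgroup G} (h : IsTopIsoZp p C) : ∃ c₀ ∈ C, c₀ ≠ 1 ∧ ∀ c ∈ C, c * c₀ = c₀ * c := by
  obtain ⟨e, -, -⟩ := h
  have : Nontrivial C := e.toEquiv.nontrivial
  obtain ⟨c₀, hc₀⟩ := exists_ne (1 : C)
  refine ⟨c₀, c₀.2, fun h1 => hc₀ (Subtype.ext h1), fun c hc => ?_⟩
  have := e.injective (by rw [map_mul, map_mul, mul_comm] : e (⟨c, hc⟩ * c₀) = e (c₀ * ⟨c, hc⟩))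
  exact congrArg Subtype.val this

end ConjSub

section Splittings

variable {p : ℕ} {G : Type u} [Group G] [TopologicalSpace G] [IsTopologicalGroup G]

theorem Subgroup.le_of_topologicalClosure_sup_eq_top {A : Subgroup G} {A₁ A₂ : Subgroup A}
    (hA : (A₁ ⊔ A₂).topologicalClosure = ⊤) {M : Subgroup G} (hM : IsClosed (M : Set G))
    (h₁ : A₁.map A.subtype ≤ M) (h₂ : A₂.map A.subtype ≤ M) : A ≤ M := by
  have hle : A₁ ⊔ A₂ ≤ M.comap A.subtype :=
    sup_le (Subgroup.map_le_iff_le_comap.mp h₁) (Subgroup.map_le_iff_le_comap.mp h₂)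
  have := Subgroup.topologicalClosure_minimal _ hle (hM.preimage continuous_subtype_val)
  rw [hA] at this
  exact fun x hx => this (Subgroup.mem_top ⟨x, hx⟩)

theorem IsAmalgFreeProdP.eq_top_of_le {A B C : Subgroup G} (h : IsAmalgFreeProdP p G A B C)
    {M : Subgroup G} (hM : IsClosed (M : Set G)) (hA : A ≤ M) {a : G} (ha : a ∈ A)
    (hB : conjSub a B ≤ M) : M = ⊤ := by
  have hBM : B ≤ M := fun b hb => by
    simpa [mul_assoc] using
      M.mul_mem (M.mul_mem (hA ha) (hB (conj_mem_conjSub a hb))) (M.inv_mem (hA ha))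
  exact eq_top_iff.mpr (h.2.2.2.1 ▸ Subgroup.topologicalClosure_minimal _ (sup_le hA hBM) hM)

theorem IsHNNProP.eq_top_of_le {A C : Subgroup G} {t : G} (h : IsHNNProP p G A C t)
    {M : Subgroup G} (hM : IsClosed (M : Set G)) (hA : A ≤ M) {a a' : G} (ha : a ∈ A)
    (ha' : a' ∈ A) (ht : a⁻¹ * t * a' ∈ M) : M = ⊤ := by
  have htM : t ∈ M := by
    simpa [mul_assoc] using M.mul_mem (M.mul_mem (hA ha) ht) (M.inv_mem (hA ha'))
  have hle : A ⊔ Subgroup.closure {t} ≤ M :=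
    sup_le hA ((Subgroup.closure_le M).mpr (Set.singleton_subset_iff.mpr htM))
  exact eq_top_iff.mpr (h.2.2.2.2.1 ▸ Subgroup.topologicalClosure_minimal _ hle hM)

variable {K : Type u} [Group K] [TopologicalSpace K] [IsTopologicalGroup K]

/-- The universal property of `A ⨿_C B` read through the equal splitting `A ⨿_{C^a} B^a`. -/
theorem IsAmalgFreeProdP.exists_extension_conj {A B C : Subgroup G}
    (h : IsAmalgFreeProdP p G A B C) (hK : IsProP p K) {χ : A →* K} {β : B →* K}
    (hχ : Continuous χ) (hβ : Continuous β) (a : A)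
    (hagree : ∀ (c : G) (hcA : c ∈ A) (hcB : c ∈ B), χ (a⁻¹ * ⟨c, hcA⟩ * a) = β ⟨c, hcB⟩) :
    ∃ φ : G →* K, Continuous φ ∧ (∀ y : A, φ y = χ y) ∧ ∀ b : B, φ ((a : G)⁻¹ * b * a) = β b := by
  obtain ⟨φ, ⟨hφ, hφA, hφB⟩, -⟩ := h.2.2.2.2 K hK χ ((MulAut.conj (χ a)).toMonoidHom.comp β)
    hχ ((IsTopologicalGroup.continuous_conj (χ a)).comp hβ) fun c hcA hcB => by
      rw [MonoidHom.comp_apply, ← hagree c hcA hcB]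
      simp only [map_mul, map_inv, MulEquiv.coe_toMonoidHom, MulAut.conj_apply]
      group
  refine ⟨φ, hφ, hφA, fun b => ?_⟩
  rw [map_mul, map_mul, map_inv, hφA a, hφB b]
  simp only [MonoidHom.comp_apply, MulEquiv.coe_toMonoidHom, MulAut.conj_apply]
  group

/-- The universal property of `HNN(A, C, t)` read through the equal splitting
`HNN(A, C^a, a⁻¹ t a')`. -/
theorem IsHNNProP.exists_extension_conj {A C : Subgroup G} {t : G} (h : IsHNNProP p G A C t)
    (hK : IsProP p K) {χ : A →* K} (hχ : Continuous χ) (a a' : A) (k : K)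
    (hk : ∀ c ∈ C, ∀ (hcA : c ∈ A) (hct : t⁻¹ * c * t ∈ A),
      k⁻¹ * χ (a⁻¹ * ⟨c, hcA⟩ * a) * k = χ (a'⁻¹ * ⟨t⁻¹ * c * t, hct⟩ * a')) :
    ∃ ω : G →* K, Continuous ω ∧ (∀ y : A, ω y = χ y) ∧ ω ((a : G)⁻¹ * t * a') = k := by
  obtain ⟨ω, ⟨hω, hωA, hωt⟩, -⟩ := h.2.2.2.2.2 K hK χ (χ a * k * (χ a')⁻¹) hχ
    fun c hcC hcA hct => by
      have := hk c hcC hcA hct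
      simp only [map_mul, map_inv] at this
      rw [show (⟨t⁻¹ * c * t, hct⟩ : A) = a' * (a'⁻¹ * ⟨t⁻¹ * c * t, hct⟩ * a') * a'⁻¹ by group,
        map_mul, map_mul, map_inv, map_mul, map_mul, map_inv, ← this]
      group
  refine ⟨ω, hω, hωA, ?_⟩
  rw [map_mul, map_mul, map_inv, hωA a, hωA a', hωt]
  group

/-- If the stable letter lay in the base, `t ↦ c₀ t` would define a second extension of the
identity of `A`. -/
theorem IsHNNProP.not_mem (hG : IsProP p G) {A C : Subgroup G} {t : G}
    (h : IsHNNProP p G A C t) {c₀ : G} (hc₀1 : c₀ ≠ 1)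
    (hcomm : ∀ c ∈ C, c * c₀ = c₀ * c) : t ∉ A := by
  intro htA
  obtain ⟨ω, ⟨-, hωA, hωt⟩, -⟩ := h.2.2.2.2.2 G hG A.subtype (c₀ * t) continuous_subtype_val
    fun c hcC _ _ => by
      simp only [Subgroup.coe_subtype, mul_inv_rev]
      rw [show t⁻¹ * c₀⁻¹ * c * (c₀ * t) = t⁻¹ * (c₀⁻¹ * (c * c₀)) * t by group, hcomm c hcC]
      group
  have : c₀ * t = t := hωt.symm.trans (hωA ⟨t, htA⟩)
  exact hc₀1 (mul_eq_right.mp this)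

end Splittings

section Amalgam

variable {p : ℕ} {G : Type u} [Group G] [TopologicalSpace G] [IsTopologicalGroup G]
  {A B C : Subgroup G} {A₁ A₂ : Subgroup A}

theorem topGen_amalg_eq_top (h : IsAmalgFreeProdP p G A B C)
    (hA : (A₁ ⊔ A₂).topologicalClosure = ⊤) (a : A) :
    topGen ((A₂.map A.subtype : Set G) ∪ ((A₁.map A.subtype : Set G) ∪ conjSub (a : G) B)) =
      ⊤ := by
  refine h.eq_top_of_le (isClosed_topGen _) ?_ a.2 fun x hx => subset_topGen _ (.inr (.inr hx))
  exact Subgroup.le_of_topologicalClosure_sup_eq_top hA (isClosed_topGen _)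
    (fun x hx => subset_topGen _ (.inr (.inl hx))) (fun x hx => subset_topGen _ (.inl hx))

theorem jointlyExtendable_amalg (h : IsAmalgFreeProdP p G A B C)
    (hfree : IsAmalgFreeProdP p A A₁ A₂ ⊥) {a : A} (ha : conjSub a (C.subgroupOf A) ≤ A₁) :
    JointlyExtendable p (A₂.map A.subtype : Set G)
      ((A₁.map A.subtype : Set G) ∪ conjSub (a : G) B) := by
  intro K _ _ _ hK ψ₁ ψ₂ hψ₁ hψ₂
  let ι₁ : A₁ →* topGen ((A₁.map A.subtype : Set G) ∪ conjSub (a : G) B) :=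
    (A.subtype.comp A₁.subtype).codRestrict _ fun y => subset_topGen _ (.inl ⟨y, y.2, rfl⟩)
  let ι₂ : A₂ →* topGen (A₂.map A.subtype : Set G) :=
    (A.subtype.comp A₂.subtype).codRestrict _ fun y => subset_topGen _ ⟨y, y.2, rfl⟩
  let κ : B →* topGen ((A₁.map A.subtype : Set G) ∪ conjSub (a : G) B) :=
    ((MulAut.conj (a : G)⁻¹).toMonoidHom.comp B.subtype).codRestrict _
      fun b => subset_topGen _ (.inr ⟨b, b.2, rfl⟩)
  obtain ⟨χ, hχ, hχ₁, hχ₂⟩ := hfree.exists_extension_of_bot hK (θ₁ := ψ₂.comp ι₁)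
    (θ₂ := ψ₁.comp ι₂)
    (hψ₂.comp ((continuous_subtype_val.comp continuous_subtype_val).subtype_mk _))
    (hψ₁.comp ((continuous_subtype_val.comp continuous_subtype_val).subtype_mk _))
  obtain ⟨φ, hφ, hφA, hφB⟩ := h.exists_extension_conj hK hχ (β := ψ₂.comp κ)
    (hψ₂.comp (((IsTopologicalGroup.continuous_conj _).comp continuous_subtype_val).subtype_mk _))
    a fun c hcA hcB => by
      have hc := conj_mem_of_conjSub_subgroupOf_le ha (c := ⟨c, hcA⟩) (h.2.2.1 ▸ ⟨hcA, hcB⟩)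
      rw [hχ₁ ⟨_, hc⟩]
      exact congrArg ψ₂ (Subtype.ext
        (show ((a⁻¹ * ⟨c, hcA⟩ * a : A) : G) = MulAut.conj (a : G)⁻¹ c by simp))
  refine ⟨φ, hφ, ?_, ?_⟩
  · rintro _ ⟨y, hy, rfl⟩
    exact (hφA y).trans (hχ₂ ⟨y, hy⟩)
  rintro _ (⟨y, hy, rfl⟩ | ⟨b, hb, rfl⟩)
  · exact (hφA y).trans (hχ₁ ⟨y, hy⟩)
  · exact (congrArg φ (by simp)).trans (hφB ⟨b, hb⟩)

end Amalgam

section HNN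

variable {p : ℕ} {G : Type u} [Group G] [TopologicalSpace G] [IsTopologicalGroup G]
  {A C : Subgroup G} {t : G} {A₁ A₂ : Subgroup A}

theorem topGen_hnn_same_eq_top (h : IsHNNProP p G A C t)
    (hA : (A₁ ⊔ A₂).topologicalClosure = ⊤) (a a' : A) :
    topGen ((A₂.map A.subtype : Set G) ∪
      ((A₁.map A.subtype : Set G) ∪ {(a : G)⁻¹ * t * a'})) = ⊤ := by
  refine h.eq_top_of_le (isClosed_topGen _) ?_ a.2 a'.2 (subset_topGen _ (.inr (.inr rfl)))
  exact Subgroup.le_of_topologicalClosure_sup_eq_top hA (isClosed_topGen _)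
    (fun x hx => subset_topGen _ (.inr (.inl hx))) (fun x hx => subset_topGen _ (.inl hx))

theorem topGen_hnn_cross_eq_top (h : IsHNNProP p G A C t)
    (hA : (A₁ ⊔ A₂).topologicalClosure = ⊤) (a a' : A) :
    topGen (((A₂.map A.subtype : Set G) ∪ conjSub ((a : G)⁻¹ * t * a') (A₁.map A.subtype)) ∪
      {(a : G)⁻¹ * t * a'}) = ⊤ := by
  set t' := (a : G)⁻¹ * t * a'
  set M := topGen (((A₂.map A.subtype : Set G) ∪ conjSub t' (A₁.map A.subtype)) ∪ {t'})
  have ht' : t' ∈ M := subset_topGen _ (.inr rfl)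
  refine h.eq_top_of_le (isClosed_topGen _) ?_ a.2 a'.2 ht'
  refine Subgroup.le_of_topologicalClosure_sup_eq_top hA (isClosed_topGen _) (fun x hx => ?_)
    (fun x hx => subset_topGen _ (.inl (.inl hx)))
  have hconj : t'⁻¹ * x * t' ∈ M := subset_topGen _ (.inl (.inr (conj_mem_conjSub t' hx)))
  simpa [mul_assoc] using M.mul_mem (M.mul_mem ht' hconj) (M.inv_mem ht')

theorem jointlyExtendable_hnn_same (h : IsHNNProP p G A C t)
    (hfree : IsAmalgFreeProdP p A A₁ A₂ ⊥) {a a' : A}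
    (ha : conjSub a (C.subgroupOf A) ≤ A₁)
    (ha' : conjSub a' ((conjSub t C).subgroupOf A) ≤ A₁) :
    JointlyExtendable p (A₂.map A.subtype : Set G)
      ((A₁.map A.subtype : Set G) ∪ {(a : G)⁻¹ * t * a'}) := by
  intro K _ _ _ hK ψ₁ ψ₂ hψ₁ hψ₂
  let ι₁ : A₁ →* topGen ((A₁.map A.subtype : Set G) ∪ {(a : G)⁻¹ * t * a'}) :=
    (A.subtype.comp A₁.subtype).codRestrict _ fun y => subset_topGen _ (.inl ⟨y, y.2, rfl⟩)
  let ι₂ : A₂ →* topGen (A₂.map A.subtype : Set G) :=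
    (A.subtype.comp A₂.subtype).codRestrict _ fun y => subset_topGen _ ⟨y, y.2, rfl⟩
  let τ : topGen ((A₁.map A.subtype : Set G) ∪ {(a : G)⁻¹ * t * a'}) :=
    ⟨_, subset_topGen _ (.inr rfl)⟩
  obtain ⟨χ, hχ, hχ₁, hχ₂⟩ := hfree.exists_extension_of_bot hK (θ₁ := ψ₂.comp ι₁)
    (θ₂ := ψ₁.comp ι₂)
    (hψ₂.comp ((continuous_subtype_val.comp continuous_subtype_val).subtype_mk _))
    (hψ₁.comp ((continuous_subtype_val.comp continuous_subtype_val).subtype_mk _))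
  obtain ⟨φ, hφ, hφA, hφt⟩ := h.exists_extension_conj hK hχ a a' (ψ₂ τ)
    fun c hcC hcA hct => by
      have hy := conj_mem_of_conjSub_subgroupOf_le ha (c := ⟨c, hcA⟩) hcC
      have hy' := conj_mem_of_conjSub_subgroupOf_le ha' (c := ⟨_, hct⟩) (conj_mem_conjSub t hcC)
      have hι : ι₁ ⟨_, hy'⟩ = τ⁻¹ * ι₁ ⟨_, hy⟩ * τ := Subtype.ext <| by
        show ((a'⁻¹ * ⟨t⁻¹ * c * t, hct⟩ * a' : A) : G) =
          ((a : G)⁻¹ * t * a')⁻¹ * ((a⁻¹ * ⟨c, hcA⟩ * a : A) : G) * ((a : G)⁻¹ * t * a')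
        simp only [Subgroup.coe_mul, Subgroup.coe_inv]
        group
      rw [hχ₁ ⟨_, hy⟩, hχ₁ ⟨_, hy'⟩, MonoidHom.comp_apply, MonoidHom.comp_apply, hι, map_mul,
        map_mul, map_inv]
  refine ⟨φ, hφ, ?_, ?_⟩
  · rintro _ ⟨y, hy, rfl⟩
    exact (hφA y).trans (hχ₂ ⟨y, hy⟩)
  rintro _ (⟨y, hy, rfl⟩ | rfl)
  · exact (hφA y).trans (hχ₁ ⟨y, hy⟩)
  · exact hφt

theorem jointlyExtendable_hnn_cross (h : IsHNNProP p G A C t)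
    (hfree : IsAmalgFreeProdP p A A₁ A₂ ⊥) {a a' : A}
    (ha : conjSub a (C.subgroupOf A) ≤ A₁)
    (ha' : conjSub a' ((conjSub t C).subgroupOf A) ≤ A₂) :
    JointlyExtendable p
      ((A₂.map A.subtype : Set G) ∪ conjSub ((a : G)⁻¹ * t * a') (A₁.map A.subtype))
      {(a : G)⁻¹ * t * a'} := by
  set t' := (a : G)⁻¹ * t * a'
  intro K _ _ _ hK ψ₁ ψ₂ hψ₁ hψ₂
  let S₁ : Set G := (A₂.map A.subtype : Set G) ∪ conjSub t' (A₁.map A.subtype)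
  let κ : A₁ →* topGen S₁ :=
    ((MulAut.conj t'⁻¹).toMonoidHom.comp (A.subtype.comp A₁.subtype)).codRestrict _
      fun y => subset_topGen _ (.inr ⟨y, ⟨y, y.2, rfl⟩, rfl⟩)
  let ι₂ : A₂ →* topGen S₁ :=
    (A.subtype.comp A₂.subtype).codRestrict _ fun y => subset_topGen _ (.inl ⟨y, y.2, rfl⟩)
  let τ : topGen {t'} := ⟨t', subset_topGen _ rfl⟩
  obtain ⟨χ, hχ, hχ₁, hχ₂⟩ := hfree.exists_extension_of_bot hK
    (θ₁ := (MulAut.conj (ψ₂ τ)).toMonoidHom.comp (ψ₁.comp κ)) (θ₂ := ψ₁.comp ι₂)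
    ((IsTopologicalGroup.continuous_conj _).comp (hψ₁.comp
      (((IsTopologicalGroup.continuous_conj _).comp
        (continuous_subtype_val.comp continuous_subtype_val)).subtype_mk _)))
    (hψ₁.comp ((continuous_subtype_val.comp continuous_subtype_val).subtype_mk _))
  obtain ⟨φ, hφ, hφA, hφt⟩ := h.exists_extension_conj hK hχ a a' (ψ₂ τ)
    fun c hcC hcA hct => by
      have hy := conj_mem_of_conjSub_subgroupOf_le ha (c := ⟨c, hcA⟩) hcC
      have hy' := conj_mem_of_conjSub_subgroupOf_le ha' (c := ⟨_, hct⟩) (conj_mem_conjSub t hcC)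
      have hκ : κ ⟨_, hy⟩ = ι₂ ⟨_, hy'⟩ := Subtype.ext <| by
        show MulAut.conj t'⁻¹ ((a⁻¹ * ⟨c, hcA⟩ * a : A) : G) =
          ((a'⁻¹ * ⟨t⁻¹ * c * t, hct⟩ * a' : A) : G)
        simp only [MulAut.conj_apply, Subgroup.coe_mul, Subgroup.coe_inv, t']
        group
      rw [hχ₁ ⟨_, hy⟩, hχ₂ ⟨_, hy'⟩]
      simp only [MonoidHom.comp_apply, MulEquiv.coe_toMonoidHom, MulAut.conj_apply, hκ]
      group
  have hφt' : φ t' = ψ₂ τ := hφt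
  refine ⟨φ, hφ, ?_, ?_⟩
  · rintro _ (⟨y, hy, rfl⟩ | ⟨_, ⟨y, hy, rfl⟩, rfl⟩)
    · exact (hφA y).trans (hχ₂ ⟨y, hy⟩)
    calc φ ((MulAut.conj t'⁻¹).toMonoidHom y) = (ψ₂ τ)⁻¹ * χ y * ψ₂ τ := by
          simp [hφA, hφt']
      _ = ψ₁ (κ ⟨y, hy⟩) := by
          rw [hχ₁ ⟨y, hy⟩]
          simp only [MonoidHom.comp_apply, MulEquiv.coe_toMonoidHom, MulAut.conj_apply]
          group
  · rintro _ rfl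
    exact hφt'

end HNN

section Main

variable {p : ℕ} {G : Type u} [Group G] [TopologicalSpace G] [IsTopologicalGroup G]
  {A : Subgroup G} {A₁ A₂ : Subgroup A}

theorem topGen_ne_bot_of_map_subtype_subset (hA₁ : A₁ ≠ ⊥) {S : Set G}
    (hS : (A₁.map A.subtype : Set G) ⊆ S) : topGen S ≠ ⊥ := by
  obtain ⟨y, hy1⟩ := Subgroup.ne_bot_iff_exists_ne_one.mp hA₁
  exact topGen_ne_bot (hS ⟨y, y.2, rfl⟩) fun h => hy1 (Subtype.ext (Subtype.ext h))

theorem splits_free_of_amalg (hG : IsProP p G) {B C : Subgroup G}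
    (h : IsAmalgFreeProdP p G A B C) (hfree : IsAmalgFreeProdP p A A₁ A₂ ⊥) (hA₁ : A₁ ≠ ⊥)
    (hA₂ : A₂ ≠ ⊥) {a : A} (ha : conjSub a (C.subgroupOf A) ≤ A₁) :
    ∃ G₁ G₂ : Subgroup G, IsAmalgFreeProdP p G G₁ G₂ ⊥ ∧ G₁ ≠ ⊥ ∧ G₂ ≠ ⊥ :=
  ⟨_, _, isAmalgFreeProdP_bot_of_jointlyExtendable hG (topGen_amalg_eq_top h hfree.2.2.2.1 a)
    (jointlyExtendable_amalg h hfree ha), topGen_ne_bot_of_map_subtype_subset hA₂ subset_rfl,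
    topGen_ne_bot_of_map_subtype_subset hA₁ Set.subset_union_left⟩

theorem splits_free_of_hnn_same (hG : IsProP p G) {C : Subgroup G} {t : G}
    (h : IsHNNProP p G A C t) (hfree : IsAmalgFreeProdP p A A₁ A₂ ⊥) (hA₁ : A₁ ≠ ⊥)
    (hA₂ : A₂ ≠ ⊥) {a a' : A} (ha : conjSub a (C.subgroupOf A) ≤ A₁)
    (ha' : conjSub a' ((conjSub t C).subgroupOf A) ≤ A₁) :
    ∃ G₁ G₂ : Subgroup G, IsAmalgFreeProdP p G G₁ G₂ ⊥ ∧ G₁ ≠ ⊥ ∧ G₂ ≠ ⊥ :=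
  ⟨_, _, isAmalgFreeProdP_bot_of_jointlyExtendable hG
    (topGen_hnn_same_eq_top h hfree.2.2.2.1 a a') (jointlyExtendable_hnn_same h hfree ha ha'),
    topGen_ne_bot_of_map_subtype_subset hA₂ subset_rfl,
    topGen_ne_bot_of_map_subtype_subset hA₁ Set.subset_union_left⟩

theorem splits_free_of_hnn_cross [Fact p.Prime] (hG : IsProP p G) {C : Subgroup G} {t : G}
    (h : IsHNNProP p G A C t) (hC : IsTopIsoZp p C) (hfree : IsAmalgFreeProdP p A A₁ A₂ ⊥)
    (hA₂ : A₂ ≠ ⊥) {a a' : A} (ha : conjSub a (C.subgroupOf A) ≤ A₁)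
    (ha' : conjSub a' ((conjSub t C).subgroupOf A) ≤ A₂) :
    ∃ G₁ G₂ : Subgroup G, IsAmalgFreeProdP p G G₁ G₂ ⊥ ∧ G₁ ≠ ⊥ ∧ G₂ ≠ ⊥ := by
  have ht' : (a : G)⁻¹ * t * a' ≠ 1 := fun h1 => by
    obtain ⟨c₀, -, hc₀1, hcomm⟩ := hC.exists_ne_one_forall_commute
    refine h.not_mem hG hc₀1 hcomm ?_
    rw [show t = a * ((a : G)⁻¹ * t * a') * (a' : G)⁻¹ by group, h1, mul_one]
    exact A.mul_mem a.2 (A.inv_mem a'.2)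
  exact ⟨_, _, isAmalgFreeProdP_bot_of_jointlyExtendable hG
    (topGen_hnn_cross_eq_top h hfree.2.2.2.1 a a') (jointlyExtendable_hnn_cross h hfree ha ha'),
    topGen_ne_bot_of_map_subtype_subset hA₂ Set.subset_union_left, topGen_ne_bot rfl ht'⟩

end Main

theorem splits_free_of_factor_splits_free
    (p : ℕ) [Fact p.Prime]
    (G : Type u) [Group G] [TopologicalSpace G] [IsTopologicalGroup G]
    (hG : IsProP p G)
    (S : SplitData G) (hS : S.IsZp p)
    (hsplit : match S with
      | .amalg A _ C =>
          ∃ A₁ A₂ : Subgroup ↥A, IsAmalgFreeProdP p ↥A A₁ A₂ ⊥ ∧ A₁ ≠ ⊥ ∧ A₂ ≠ ⊥ ∧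
            ∃ a : ↥A, conjSub a (C.subgroupOf A) ≤ A₁ ∨ conjSub a (C.subgroupOf A) ≤ A₂
      | .hnn A C t =>
          ∃ A₁ A₂ : Subgroup ↥A, IsAmalgFreeProdP p ↥A A₁ A₂ ⊥ ∧ A₁ ≠ ⊥ ∧ A₂ ≠ ⊥ ∧
            (∃ a : ↥A, conjSub a (C.subgroupOf A) ≤ A₁ ∨ conjSub a (C.subgroupOf A) ≤ A₂) ∧
            (∃ a : ↥A, conjSub a ((conjSub t C).subgroupOf A) ≤ A₁ ∨
              conjSub a ((conjSub t C).subgroupOf A) ≤ A₂)) :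
    ∃ G₁ G₂ : Subgroup G, IsAmalgFreeProdP p G G₁ G₂ ⊥ ∧ G₁ ≠ ⊥ ∧ G₂ ≠ ⊥ := by
  cases S with
  | amalg A B C =>
    obtain ⟨A₁, A₂, hfree, hA₁, hA₂, a, ha | ha⟩ := hsplit
    · exact splits_free_of_amalg hG hS.1 hfree hA₁ hA₂ ha
    · exact splits_free_of_amalg hG hS.1 hfree.symm hA₂ hA₁ ha
  | hnn A C t =>
    obtain ⟨A₁, A₂, hfree, hA₁, hA₂, ⟨a, ha | ha⟩, ⟨a', ha' | ha'⟩⟩ := hsplit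
    · exact splits_free_of_hnn_same hG hS.1 hfree hA₁ hA₂ ha ha'
    · exact splits_free_of_hnn_cross hG hS.1 hS.2 hfree hA₂ ha ha'
    · exact splits_free_of_hnn_cross hG hS.1 hS.2 hfree.symm hA₁ ha ha'
    · exact splits_free_of_hnn_same hG hS.1 hfree.symm hA₂ hA₁ ha ha'
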